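/- The integral (4/ρ)·∫₀^∞ exp(−2πλ·V(s)) ds converges and equals CRB_LB,N = (4/(ρ·γ²))·(πλ·Γ(γ/(γ+2)))^{−(γ/2+1)}·Γ(2 + γ/2). -/

import Mathlib

/-!
For fixed `s` the substitution `r = x ^ (-1/(γ+2))` turns `V s` into a multiple of
`∫₀^∞ (1 - e^{-a x}) x^{-c-1} dx` with `a = s γ²` and `c = 2/(γ+2)`; one integration by parts
evaluates this as `a^c Γ(1-c)/c`, so `V s = (s γ²)^c Γ(γ/(γ+2))/2`. The integrand in `s` is
then the stretched exponential `exp (-b s^c)`, whose integral is `b^{-1/c} Γ(1/c + 1)`.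
-/

open MeasureTheory Real

open Filter Topology Set

lemma norm_one_sub_exp_neg_le_min {y : ℝ} (hy : 0 ≤ y) : ‖1 - exp (-y)‖ ≤ min 1 y := by
  have hexp : exp (-y) ≤ 1 := exp_le_one_iff.mpr (neg_nonpos.mpr hy)
  rw [norm_of_nonneg (sub_nonneg.mpr hexp)]
  exact le_min (by linarith [exp_pos (-y)]) (by linarith [one_sub_le_exp_neg y])

section
variable {a c : ℝ}

lemma norm_one_sub_exp_neg_mul_mul_rpow_le (ha : 0 ≤ a) {x : ℝ} (hx : 0 < x) (s : ℝ) :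
    ‖(1 - exp (-(a * x))) * x ^ s‖ ≤ min 1 (a * x) * x ^ s := by
  rw [norm_mul, norm_of_nonneg (rpow_nonneg hx.le s)]
  exact mul_le_mul_of_nonneg_right (norm_one_sub_exp_neg_le_min (by positivity))
    (rpow_nonneg hx.le s)

lemma integrableOn_one_sub_exp_neg_mul_mul_rpow (ha : 0 ≤ a) (hc0 : 0 < c) (hc1 : c < 1) :
    IntegrableOn (fun x : ℝ => (1 - exp (-(a * x))) * x ^ (-c - 1)) (Ioi 0) := by
  have hmeas : AEStronglyMeasurable (fun x : ℝ => (1 - exp (-(a * x))) * x ^ (-c - 1)) :=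
    (by fun_prop : Measurable _).aestronglyMeasurable
  rw [← Ioc_union_Ioi_eq_Ioi zero_le_one, integrableOn_union]
  constructor
  · have hpow : IntegrableOn (fun x : ℝ => x ^ (-c)) (Ioc 0 1) :=
      (intervalIntegrable_iff_integrableOn_Ioc_of_le zero_le_one).mp
        (intervalIntegral.intervalIntegrable_rpow' (by linarith))
    refine (hpow.const_mul a).mono' hmeas.restrict ?_
    filter_upwards [ae_restrict_mem measurableSet_Ioc] with x hx
    calc _ ≤ min 1 (a * x) * x ^ (-c - 1) := norm_one_sub_exp_neg_mul_mul_rpow_le ha hx.1 _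
      _ ≤ a * x * x ^ (-c - 1) :=
          mul_le_mul_of_nonneg_right (min_le_right _ _) (rpow_nonneg hx.1.le _)
      _ = a * x ^ (-c) := by rw [rpow_sub_one hx.1.ne']; field_simp [hx.1.ne']
  · refine (integrableOn_Ioi_rpow_of_lt (a := -c - 1) (by linarith) one_pos).mono'
      hmeas.restrict ?_
    filter_upwards [ae_restrict_mem measurableSet_Ioi] with x (hx : 1 < x)
    calc _ ≤ min 1 (a * x) * x ^ (-c - 1) :=
          norm_one_sub_exp_neg_mul_mul_rpow_le ha (one_pos.trans hx) _
      _ ≤ x ^ (-c - 1) := by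
          have := rpow_nonneg (one_pos.trans hx).le (-c - 1)
          nlinarith [min_le_left 1 (a * x)]

lemma tendsto_one_sub_exp_neg_mul_mul_rpow_nhdsGT_zero (ha : 0 ≤ a) (hc : c < 1) :
    Tendsto (fun x : ℝ => (1 - exp (-(a * x))) * x ^ (-c)) (𝓝[>] 0) (𝓝 0) := by
  have hbound : Tendsto (fun x : ℝ => a * x ^ (1 - c)) (𝓝[>] 0) (𝓝 0) := by
    have := ((continuousAt_rpow_const 0 (1 - c) (Or.inr (by linarith))).tendsto.const_mul a)
    rw [zero_rpow (by linarith), mul_zero] at this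
    exact this.mono_left nhdsWithin_le_nhds
  refine squeeze_zero_norm' ?_ hbound
  filter_upwards [self_mem_nhdsWithin] with x (hx : 0 < x)
  calc _ ≤ min 1 (a * x) * x ^ (-c) := norm_one_sub_exp_neg_mul_mul_rpow_le ha hx _
    _ ≤ a * x * x ^ (-c) := mul_le_mul_of_nonneg_right (min_le_right _ _) (rpow_nonneg hx.le _)
    _ = a * x ^ (1 - c) := by rw [sub_eq_neg_add, rpow_add_one hx.ne']; ring

lemma tendsto_one_sub_exp_neg_mul_mul_rpow_atTop (ha : 0 < a) (hc : 0 < c) :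
    Tendsto (fun x : ℝ => (1 - exp (-(a * x))) * x ^ (-c)) atTop (𝓝 0) := by
  have hexp : Tendsto (fun x : ℝ => 1 - exp (-(a * x))) atTop (𝓝 1) := by
    have := tendsto_exp_atBot.comp (tendsto_neg_atTop_atBot.comp (tendsto_id.const_mul_atTop ha))
    simpa using this.const_sub 1
  simpa using hexp.mul (tendsto_rpow_neg_atTop hc)

theorem integral_one_sub_exp_neg_mul_mul_rpow (ha : 0 < a) (hc0 : 0 < c) (hc1 : c < 1) :
    ∫ x in Ioi 0, (1 - exp (-(a * x))) * x ^ (-c - 1) = a ^ c * Gamma (1 - c) / c := by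
  have hgamma : ∫ x in Ioi 0, x ^ (-c) * exp (-(a * x)) = (1 / a) ^ (1 - c) * Gamma (1 - c) := by
    simpa only [sub_sub_cancel_left] using
      integral_rpow_mul_exp_neg_mul_Ioi (a := 1 - c) (by linarith) ha
  -- A non-integrable function would have integral `0`.
  have hint : IntegrableOn (fun x => x ^ (-c) * exp (-(a * x))) (Ioi 0) :=
    Integrable.of_integral_ne_zero <| by
      rw [hgamma]; exact (mul_pos (by positivity) (Gamma_pos_of_pos (by linarith))).ne'
  have hparts := integral_Ioi_mul_deriv_eq_deriv_mul (a := 0) (a' := 0) (b' := 0)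
    (u := fun x => 1 - exp (-(a * x))) (u' := fun x => exp (-(a * x)) * a)
    (v := fun x => -1 / c * x ^ (-c)) (v' := fun x => x ^ (-c - 1))
    (fun x _ => by simpa using ((hasDerivAt_id x).const_mul a).neg.exp.const_sub 1)
    (fun x (hx : 0 < x) =>
      ((hasDerivAt_rpow_const (Or.inl hx.ne')).const_mul (-1 / c)).congr_deriv
        (by field_simp))
    (integrableOn_one_sub_exp_neg_mul_mul_rpow ha.le hc0 hc1)
    (IntegrableOn.congr_fun (hint.const_mul (-(a / c)))
      (fun x _ => by simp only [Pi.mul_apply]; ring) measurableSet_Ioi)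
    (by simpa [Pi.mul_def, mul_left_comm] using
      (tendsto_one_sub_exp_neg_mul_mul_rpow_nhdsGT_zero ha.le hc1).const_mul (-1 / c))
    (by simpa [Pi.mul_def, mul_left_comm] using
      (tendsto_one_sub_exp_neg_mul_mul_rpow_atTop ha hc0).const_mul (-1 / c))
  calc _ = a / c * ∫ x in Ioi 0, x ^ (-c) * exp (-(a * x)) := by
        rw [hparts, sub_self, zero_sub, ← integral_neg, ← integral_const_mul]
        refine setIntegral_congr_fun measurableSet_Ioi fun x _ => ?_
        ring
    _ = a ^ c * Gamma (1 - c) / c := by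
        rw [hgamma, one_div, inv_rpow ha.le, ← rpow_neg ha.le, neg_sub, rpow_sub_one ha.ne']
        field_simp

end

theorem integral_one_sub_exp_neg_mul_rpow_neg_mul_self {a β : ℝ} (ha : 0 < a) (hβ : 2 < β) :
    ∫ r in Ioi 0, (1 - exp (-(a * r ^ (-β)))) * r = a ^ (2 / β) * Gamma (1 - 2 / β) / 2 := by
  have hβ0 : 0 < β := by linarith
  have hp : -1 / β < 0 := div_neg_of_neg_of_pos neg_one_lt_zero hβ0
  rw [← integral_comp_rpow_Ioi _ hp.ne]
  calc _ = ∫ x in Ioi 0, 1 / β * ((1 - exp (-(a * x))) * x ^ (-(2 / β) - 1)) := by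
        refine setIntegral_congr_fun measurableSet_Ioi fun x (hx : 0 < x) => ?_
        have hpow : x ^ (-1 / β - 1) * x ^ (-1 / β) = x ^ (-(2 / β) - 1) := by
          rw [← rpow_add hx]; ring_nf
        rw [smul_eq_mul, abs_of_neg hp, ← rpow_mul hx.le, show -1 / β * -β = 1 by field_simp,
          rpow_one, ← hpow]
        ring
    _ = _ := by
        rw [integral_const_mul,
          integral_one_sub_exp_neg_mul_mul_rpow ha (by positivity) ((div_lt_one hβ0).mpr hβ)]
        field_simp

theorem narrowband_CRB_closed_form_general (γ lam ρ : ℝ)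
    (hγ : 2 < γ) (hlam : 0 < lam)
    (V : ℝ → ℝ)
    (hV : ∀ s > 0, V s = ∫ r in Set.Ioi (0 : ℝ),
      (1 - Real.exp (-(s * γ ^ 2 * r ^ (-γ - 2)))) * r) :
    IntegrableOn (fun s : ℝ => Real.exp (-(2 * π * lam * V s))) (Set.Ioi 0) ∧
    (4 / ρ) * ∫ s in Set.Ioi (0 : ℝ), Real.exp (-(2 * π * lam * V s))
      = (4 / (ρ * γ ^ 2)) * (π * lam * Real.Gamma (γ / (γ + 2))) ^ (-(γ / 2 + 1))
          * Real.Gamma (2 + γ / 2) := by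
  set c : ℝ := 2 / (γ + 2) with hc
  have hc0 : 0 < c := by positivity
  set Γ₀ := Gamma (γ / (γ + 2))
  have hΓ₀ : 0 < Γ₀ := Gamma_pos_of_pos (by positivity)
  set b := π * lam * Γ₀ * (γ ^ 2) ^ c with hb_def
  have hb : 0 < b := by positivity
  have hintegrand : EqOn (fun s => exp (-(2 * π * lam * V s))) (fun s => exp (-b * s ^ c))
      (Ioi 0) := fun s (hs : 0 < s) => by
    have hVs : V s = (s * γ ^ 2) ^ c * Γ₀ / 2 := by
      rw [hV s hs, show -γ - 2 = -(γ + 2) by ring,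
        integral_one_sub_exp_neg_mul_rpow_neg_mul_self (by positivity) (by linarith),
        show 1 - 2 / (γ + 2) = γ / (γ + 2) by field_simp; ring]
    simp only [hVs, mul_rpow hs.le (sq_nonneg γ), hb_def]
    ring_nf
  have hint : IntegrableOn (fun s : ℝ => exp (-b * s ^ c)) (Ioi 0) := by
    simpa using integrableOn_rpow_mul_exp_neg_mul_rpow (s := 0) neg_one_lt_zero hc0 hb
  refine ⟨hint.congr_fun hintegrand.symm measurableSet_Ioi, ?_⟩
  rw [setIntegral_congr_fun measurableSet_Ioi hintegrand, integral_exp_neg_mul_rpow hc0 hb, hb_def,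
    mul_rpow (by positivity) (by positivity), ← rpow_mul (sq_nonneg γ),
    show c * (-1 / c) = -1 by field_simp, rpow_neg_one, neg_div,
    show 1 / c = γ / 2 + 1 by rw [hc]; field_simp, show γ / 2 + 1 + 1 = 2 + γ / 2 by ring]
  field_simp

/-- With `V(s) = ∫₀^∞ (1 − exp(−s·γ²·r^{−γ−2}))·r dr`, the integral
`(4/ρ)·∫₀^∞ exp(−2πλ·V(s)) ds` converges and equals
`CRB_LB,N = (4/(ρ·γ²))·(πλ·Γ(γ/(γ+2)))^{−(γ/2+1)}·Γ(2 + γ/2)`. -/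
theorem narrowband_CRB_closed_form (γ lam ρ : ℝ)
    (hγ : 2 < γ) (hlam : 0 < lam) (hρ : 0 < ρ)
    (V : ℝ → ℝ)
    (hV : ∀ s > 0, V s = ∫ r in Set.Ioi (0 : ℝ),
      (1 - Real.exp (-(s * γ ^ 2 * r ^ (-γ - 2)))) * r) :
    IntegrableOn (fun s : ℝ => Real.exp (-(2 * π * lam * V s))) (Set.Ioi 0) ∧
    (4 / ρ) * ∫ s in Set.Ioi (0 : ℝ), Real.exp (-(2 * π * lam * V s))
      = (4 / (ρ * γ ^ 2)) * (π * lam * Real.Gamma (γ / (γ + 2))) ^ (-(γ / 2 + 1))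
          * Real.Gamma (2 + γ / 2) :=
  narrowband_CRB_closed_form_general γ lam ρ hγ hlam V hV
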